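/- arXiv:2205.01976 — 4 statements merged into one kernel-verified Lean document; each statement's English description precedes it below -/
import Mathlib

section
/- For every finite simple graph G with at least one vertex, |V(G)| ≥ ivs_χ(G) · χ(G). -/
/-- The chromatic number of `G` as a natural number. -/
noncomputable def chi {V : Type*} [Fintype V] (G : SimpleGraph V) : ℕ :=
  G.chromaticNumber.toNat

/-- The maximum degree of `G` (classical version, no decidability assumptions). -/
noncomputable def maxDeg {V : Type*} [Fintype V] (G : SimpleGraph V) : ℕ :=
  @SimpleGraph.maxDegree V G _ (Classical.decRel _)

/-- The degree of a vertex `v` of `G` (classical version). -/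
noncomputable def deg {V : Type*} [Fintype V] (G : SimpleGraph V) (v : V) : ℕ :=
  @SimpleGraph.degree V G v (@SimpleGraph.neighborSetFintype V G _ (Classical.decRel _) v)

/-- The chromatic vertex stability of `G`: the minimum size of a set `S` of vertices
such that the subgraph induced on the complement of `S` has chromatic number `χ(G) - 1`. -/
noncomputable def vsChi {V : Type*} [Fintype V] [DecidableEq V] (G : SimpleGraph V) : ℕ :=
  sInf {n : ℕ | ∃ S : Finset V, S.card = n ∧
    chi (G.induce (↑(Sᶜ) : Set V)) = chi G - 1}

/-- The independent chromatic vertex stability of `G`: the minimum size of an independent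
set `S` of vertices such that the subgraph induced on the complement of `S` has chromatic
number `χ(G) - 1`. -/
noncomputable def ivsChi {V : Type*} [Fintype V] [DecidableEq V] (G : SimpleGraph V) : ℕ :=
  sInf {n : ℕ | ∃ S : Finset V, S.card = n ∧
    (∀ x ∈ S, ∀ y ∈ S, ¬ G.Adj x y) ∧
    chi (G.induce (↑(Sᶜ) : Set V)) = chi G - 1}

/-!
Fix an optimal colouring of `G` with `χ(G)` colours. Each colour class is independent, and
deleting it leaves a graph coloured by the remaining `χ(G) - 1` colours; it cannot leave fewer,
since an independent set can always be given one fresh colour. So every colour class is a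
candidate in the definition of `ivs_χ(G)`, and the `χ(G)` classes partition `V(G)`.
-/

open Finset

namespace SimpleGraph

variable {V : Type*} [Fintype V] {G : SimpleGraph V}

lemma colorable_chi (G : SimpleGraph V) : G.Colorable (chi G) :=
  G.colorable_chromaticNumber_of_fintype

lemma chi_le_of_colorable {n : ℕ} (h : G.Colorable n) : chi G ≤ n :=
  ENat.toNat_le_of_le_natCast h.chromaticNumber_le

variable [DecidableEq V]

lemma chi_le_chi_induce_compl_add_one {S : Finset V} (hS : G.IsIndepSet S) :
    chi G ≤ chi (G.induce ↑Sᶜ) + 1 := by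
  obtain ⟨D⟩ := colorable_chi (G.induce ↑Sᶜ)
  let E : G.Coloring (Option (Fin (chi (G.induce ↑Sᶜ)))) :=
    Coloring.mk (fun v => if h : v ∈ S then none else some (D ⟨v, by simpa using h⟩))
      fun {v w} hvw => by
        by_cases hv : v ∈ S <;> by_cases hw : w ∈ S <;> simp only [hv, hw, dite_true,
          dite_false, ne_eq, reduceCtorEq, not_false_eq_true, Option.some.injEq]
        · exact (hS hv hw (G.ne_of_adj hvw) hvw).elim
        · exact D.valid (by simpa using hvw)
  simpa using chi_le_of_colorable E.colorable

lemma chi_induce_compl_colorClass_le {n : ℕ} (C : G.Coloring (Fin n)) (i : Fin n) :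
    chi (G.induce ↑({v | C v = i} : Finset V)ᶜ) ≤ n - 1 := by
  let E : (G.induce ↑({v | C v = i} : Finset V)ᶜ).Coloring {j : Fin n // j ≠ i} :=
    Coloring.mk (fun v => ⟨C v, by simpa using v.2⟩)
      fun hvw h => C.valid hvw (congrArg Subtype.val h)
  simpa using chi_le_of_colorable E.colorable

lemma chi_induce_compl_colorClass (C : G.Coloring (Fin (chi G))) (i : Fin (chi G)) :
    chi (G.induce ↑({v | C v = i} : Finset V)ᶜ) = chi G - 1 := by
  have hge := chi_le_chi_induce_compl_add_one (S := {v | C v = i})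
    (by simpa [Coloring.colorClass] using C.isIndepSet_colorClass i)
  have hle := chi_induce_compl_colorClass_le C i
  omega

lemma ivsChi_le_card_colorClass (C : G.Coloring (Fin (chi G))) (i : Fin (chi G)) :
    ivsChi G ≤ #{v | C v = i} :=
  Nat.sInf_le ⟨_, rfl,
    fun _ hv _ hw => C.not_adj_of_mem_colorClass (mem_filter.1 hv).2 (mem_filter.1 hw).2,
    chi_induce_compl_colorClass C i⟩

end SimpleGraph

theorem stmt_2_general {V : Type*} [Fintype V] [DecidableEq V] (G : SimpleGraph V) :
    Fintype.card V ≥ ivsChi G * chi G := by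
  obtain ⟨C⟩ := G.colorable_chi
  calc ivsChi G * chi G = #(univ : Finset (Fin (chi G))) • ivsChi G := by simp [mul_comm]
    _ ≤ ∑ i, #{v | C v = i} :=
      card_nsmul_le_sum _ _ _ fun i _ => SimpleGraph.ivsChi_le_card_colorClass C i
    _ = Fintype.card V := (card_eq_sum_card_fiberwise fun v _ => mem_univ (C v)).symm

/-- For every nonempty finite simple graph `G`, `|V(G)| ≥ ivs_χ(G) · χ(G)`. -/
theorem stmt_2 {V : Type*} [Fintype V] [DecidableEq V] [Nonempty V] (G : SimpleGraph V) :
    Fintype.card V ≥ ivsChi G * chi G :=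
  stmt_2_general G
end

section
/- If G is a finite simple graph with at least one vertex and Δ(G) ≤ 2, then vs_χ(G) = ivs_χ(G). -/
/-!
A minimum set `S` whose deletion lowers `χ` by one can be chosen independent. If `u, v ∈ S` are
adjacent, minimality forces `u` to have at least `χ(G) - 1` neighbours outside `S` (otherwise `u`
could be put back and coloured greedily), while `Δ(G) ≤ 2` leaves it at most one; hence
`χ(G) = 2` and `S` is a minimum vertex cover whose complement is nonempty. Fix a proper
2-colouring and let `u` be the end of colour `0`: trading `u` for its neighbour outside `S` gives
another such cover with fewer vertices of colour `0`. So a minimum witness minimising that count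
is independent.
-/

open Finset

namespace SimpleGraph

variable {V : Type*} {G : SimpleGraph V}

theorem colorable_induce_iff {s : Set V} {n : ℕ} :
    (G.induce s).Colorable n ↔
      ∃ f : V → ℕ, (∀ x ∈ s, f x < n) ∧ ∀ x ∈ s, ∀ y ∈ s, G.Adj x y → f x ≠ f y := by
  classical
  rw [colorable_iff_exists_bdd_nat_coloring]
  constructor
  · rintro ⟨C, hC⟩
    refine ⟨fun x => if hx : x ∈ s then C ⟨x, hx⟩ else 0, fun x hx => ?_, fun x hx y hy hxy => ?_⟩
    · simpa [hx] using hC ⟨x, hx⟩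
    · simpa [hx, hy] using C.valid (show (G.induce s).Adj ⟨x, hx⟩ ⟨y, hy⟩ from hxy)
  · rintro ⟨f, hlt, hf⟩
    exact ⟨Coloring.mk (fun x => f x) fun {x y} hxy => hf x x.2 y y.2 hxy, fun x => hlt x x.2⟩

theorem Colorable.induce_of_subset {s t : Set V} {n : ℕ} (hst : s ⊆ t)
    (h : (G.induce t).Colorable n) : (G.induce s).Colorable n :=
  h.of_hom (induceHomOfLE G hst).toHom

theorem Colorable.induce_insert {s : Set V} {n : ℕ} {u : V} (N : Finset V)
    (hN : ∀ x ∈ s, G.Adj u x → x ∈ N) (hn : N.card < n) (h : (G.induce s).Colorable n) :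
    (G.induce (insert u s)).Colorable n := by
  classical
  obtain ⟨f, hlt, hf⟩ := colorable_induce_iff.1 h
  obtain ⟨a, ha, haN⟩ : ∃ a ∈ range n, a ∉ N.image f :=
    exists_mem_notMem_of_card_lt_card (card_image_le.trans_lt (by rwa [card_range]))
  have hfresh : ∀ x ∈ s, G.Adj u x → a ≠ f x := fun x hx hux hax =>
    haN (hax ▸ mem_image_of_mem f (hN x hx hux))
  refine colorable_induce_iff.2 ⟨Function.update f u a, fun x hx => ?_, fun x hx y hy hxy => ?_⟩
  · rw [Function.update_apply]
    split_ifs with hxu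
    · exact mem_range.1 ha
    · exact hlt x (hx.resolve_left hxu)
  · simp only [Function.update_apply]
    split_ifs with hxu hyu hyu
    · exact absurd (hxu.trans hyu.symm) (G.ne_of_adj hxy)
    · exact hfresh y (hy.resolve_left hyu) (hxu ▸ hxy)
    · exact (hfresh x (hx.resolve_left hxu) (hyu ▸ hxy.symm)).symm
    · exact hf x (hx.resolve_left hxu) y (hy.resolve_left hyu) hxy

theorem IsIndepSet.colorable_succ {S : Set V} {n : ℕ} (hS : G.IsIndepSet S)
    (h : (G.induce Sᶜ).Colorable n) : G.Colorable (n + 1) := by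
  classical
  obtain ⟨f, hlt, hf⟩ := colorable_induce_iff.1 h
  refine (colorable_iff_exists_bdd_nat_coloring _).2
    ⟨Coloring.mk (fun x => if x ∈ S then n else f x) fun {x y} hxy => ?_, fun x => ?_⟩
  · by_cases hx : x ∈ S <;> by_cases hy : y ∈ S <;> simp only [hx, hy, if_true, if_false]
    · exact absurd hxy (hS hx hy (G.ne_of_adj hxy))
    · exact (hlt y hy).ne'
    · exact (hlt x hx).ne
    · exact hf x hx y hy hxy
  · change (if x ∈ S then n else f x) < n + 1
    split_ifs with hx
    · exact n.lt_succ_self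
    · exact (hlt x hx).trans n.lt_succ_self

end SimpleGraph

open SimpleGraph

theorem card_le_maxDeg_of_forall_adj {V : Type*} [Fintype V] {G : SimpleGraph V} {u : V}
    {t : Finset V} (ht : ∀ x ∈ t, G.Adj u x) : t.card ≤ maxDeg G := by
  classical
  calc t.card ≤ (G.neighborFinset u).card :=
        card_le_card fun x hx => (mem_neighborFinset G u x).2 (ht x hx)
    _ = G.degree u := G.card_neighborFinset_eq_degree u
    _ ≤ maxDeg G := G.degree_le_maxDegree u

section chi

variable {W : Type*} [Fintype W]

theorem chi_le_iff_colorable (H : SimpleGraph W) (n : ℕ) : chi H ≤ n ↔ H.Colorable n := by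
  have hfin : H.chromaticNumber ≠ ⊤ :=
    chromaticNumber_ne_top_iff_exists.2 ⟨_, H.colorable_of_fintype⟩
  rw [← chromaticNumber_le_iff_colorable, ← ENat.natCast_toNat hfin, Nat.cast_le, chi]

theorem one_le_chi [Nonempty W] (H : SimpleGraph W) : 1 ≤ chi H := by
  by_contra! h0
  have := (chi_le_iff_colorable H 0).1 (by omega)
  exact not_isEmpty_of_nonempty W (colorable_zero_iff.1 this)

theorem two_le_chi_of_adj {H : SimpleGraph W} {x y : W} (hxy : H.Adj x y) : 2 ≤ chi H := by
  by_contra! h1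
  have := colorable_one_iff.1 ((chi_le_iff_colorable H 1).1 (by omega))
  exact (this ▸ hxy : (⊥ : SimpleGraph W).Adj x y)

theorem chi_induce_mono {V : Type*} {G : SimpleGraph V} {s t : Set V} [Fintype s] [Fintype t]
    (hst : s ⊆ t) : chi (G.induce s) ≤ chi (G.induce t) :=
  (chi_le_iff_colorable _ _).2 (((chi_le_iff_colorable _ _).1 le_rfl).induce_of_subset hst)

end chi

section

variable {V : Type*} [Fintype V] [DecidableEq V] {G : SimpleGraph V}

def ReducesChi (G : SimpleGraph V) (S : Finset V) : Prop :=
  chi (G.induce (↑(Sᶜ) : Set V)) = chi G - 1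

theorem exists_reducesChi (G : SimpleGraph V) : ∃ S, ReducesChi G S := by
  classical
  obtain ⟨c, hc⟩ :=
    (colorable_iff_exists_bdd_nat_coloring _).1 ((chi_le_iff_colorable G _).1 le_rfl)
  set S := univ.filter fun x => c x = chi G - 1
  refine ⟨S, le_antisymm ?_ ?_⟩
  · rw [chi_le_iff_colorable, colorable_induce_iff]
    refine ⟨c, fun x hx => ?_, fun x _ y _ hxy => c.valid hxy⟩
    have hx' : c x ≠ chi G - 1 := by simpa [S] using hx
    have := hc x
    omega
  · have hS : G.IsIndepSet (S : Set V) := fun x hx y hy _ hxy => by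
      have hx' : c x = chi G - 1 := by simpa [S] using hx
      have hy' : c y = chi G - 1 := by simpa [S] using hy
      exact c.valid hxy (hx'.trans hy'.symm)
    have hcol : (G.induce (S : Set V)ᶜ).Colorable (chi (G.induce (↑(Sᶜ) : Set V))) := by
      rw [← coe_compl]
      exact (chi_le_iff_colorable _ _).1 le_rfl
    have := (chi_le_iff_colorable G _).2 (hS.colorable_succ hcol)
    omega

theorem exists_reducesChi_minimal (G : SimpleGraph V) :
    ∃ S, ReducesChi G S ∧ ∀ T, ReducesChi G T → S.card ≤ T.card := by
  classical
  obtain ⟨S₀, hS₀⟩ := exists_reducesChi G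
  obtain ⟨S, hS, hmin⟩ := exists_min_image (univ.filter (ReducesChi G)) card ⟨S₀, by simpa using hS₀⟩
  exact ⟨S, (mem_filter.1 hS).2, fun T hT => hmin T (by simpa using hT)⟩

theorem ReducesChi.le_card_of_minimal {S : Finset V} (hS : ReducesChi G S)
    (hmin : ∀ T, ReducesChi G T → S.card ≤ T.card) {u : V} (hu : u ∈ S) {N : Finset V}
    (hN : ∀ x ∉ S, G.Adj u x → x ∈ N) : chi G - 1 ≤ N.card := by
  by_contra! hlt
  have hsub : (↑Sᶜ : Set V) ⊆ ↑(S.erase u)ᶜ :=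
    coe_subset.2 (compl_subset_compl.2 (erase_subset u S))
  have hcol : (G.induce ↑(S.erase u)ᶜ).Colorable (chi G - 1) := by
    rw [compl_erase, coe_insert]
    exact ((chi_le_iff_colorable _ _).1 hS.le).induce_insert N
      (fun x hx => hN x (by simpa using hx)) hlt
  have hred : ReducesChi G (S.erase u) :=
    le_antisymm ((chi_le_iff_colorable _ _).2 hcol) (hS ▸ chi_induce_mono hsub)
  have := hmin _ hred
  rw [card_erase_of_mem hu] at this
  have := card_pos.2 ⟨u, hu⟩
  omega

theorem chi_induce_compl_insert_erase_eq_one (h : maxDeg G ≤ 2) {S : Finset V}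
    (hS : chi (G.induce (↑(Sᶜ) : Set V)) = 1) {u v w : V} (hv : v ∈ S) (hw : w ∉ S)
    (huv : G.Adj u v) (huw : G.Adj u w) :
    chi (G.induce (↑((insert w (S.erase u))ᶜ) : Set V)) = 1 := by
  have hne : u ≠ w := G.ne_of_adj huw
  refine le_antisymm ((chi_le_iff_colorable _ _).2 ?_) ?_
  · rw [compl_insert, compl_erase, erase_insert_of_ne hne, coe_insert]
    refine Colorable.induce_insert ∅ (fun x hx hux => ?_) one_pos
      (((chi_le_iff_colorable _ _).1 hS.le).induce_of_subset (coe_subset.2 (erase_subset w _)))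
    obtain ⟨hxS, hxw⟩ : x ∉ S ∧ x ≠ w := by simpa using hx
    have h3 : ({v, w, x} : Finset V).card = 3 :=
      card_eq_three.2 ⟨v, w, x, ne_of_mem_of_not_mem hv hw, ne_of_mem_of_not_mem hv hxS,
        hxw.symm, rfl⟩
    have := card_le_maxDeg_of_forall_adj (G := G) (u := u) (t := {v, w, x}) (by simp [huv, huw, hux])
    omega
  · have : Nonempty (↑((insert w (S.erase u))ᶜ) : Set V) := ⟨⟨u, by simp [hne]⟩⟩
    exact one_le_chi _

theorem ReducesChi.exists_indep_of_minimal (h : maxDeg G ≤ 2) {S : Finset V}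
    (hS : ReducesChi G S) (hmin : ∀ T, ReducesChi G T → S.card ≤ T.card) :
    ∃ T, ReducesChi G T ∧ T.card = S.card ∧ ∀ x ∈ T, ∀ y ∈ T, ¬ G.Adj x y := by
  classical
  obtain ⟨c, hc⟩ :=
    (colorable_iff_exists_bdd_nat_coloring _).1 ((chi_le_iff_colorable G _).1 le_rfl)
  obtain ⟨T, hT, hTmin⟩ := exists_min_image
    ((univ : Finset (Finset V)).filter fun T => ReducesChi G T ∧ T.card = S.card)
    (fun T => (T.filter (c · = 0)).card) ⟨S, by simp [hS]⟩
  simp only [mem_filter, mem_univ, true_and, and_imp] at hT hTmin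
  obtain ⟨hT, hTcard⟩ := hT
  have hTmin' : ∀ T', ReducesChi G T' → T.card ≤ T'.card := hTcard ▸ hmin
  refine ⟨T, hT, hTcard, fun u hu v hv huv => ?_⟩
  have hchi : chi G = 2 := by
    let N := univ.filter fun x => G.Adj u x ∧ x ∉ T
    have hN := hT.le_card_of_minimal hTmin' hu (N := N) (by simp +contextual [N])
    have hdeg := card_le_maxDeg_of_forall_adj (G := G) (u := u) (t := insert v N) (by simp +contextual [N, huv])
    rw [card_insert_of_notMem (by simp [N, hv])] at hdeg
    have := two_le_chi_of_adj huv
    omega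
  wlog hu0 : c u = 0 generalizing u v
  · exact this v hv u hu huv.symm (by have := hc u; have := hc v; have := c.valid huv; omega)
  obtain ⟨w, hw, huw⟩ : ∃ w ∉ T, G.Adj u w := by
    by_contra! hno
    have := hT.le_card_of_minimal hTmin' hu (N := ∅) fun x hx hux => absurd hux (hno x hx)
    simp only [card_empty] at this
    omega
  have hcw : c w ≠ 0 := hu0 ▸ (c.valid huw).symm
  have hT' : ReducesChi G (insert w (T.erase u)) := by
    unfold ReducesChi at hT ⊢
    rw [hchi] at hT ⊢
    exact chi_induce_compl_insert_erase_eq_one h hT hv hw huv huw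
  have hcard : (insert w (T.erase u)).card = S.card := by
    rw [card_insert_of_notMem fun h => hw (mem_of_mem_erase h), card_erase_of_mem hu,
      ← hTcard, Nat.sub_add_cancel (card_pos.2 ⟨u, hu⟩)]
  have hu' : u ∈ T.filter (c · = 0) := mem_filter.2 ⟨hu, hu0⟩
  have hdrop := hTmin _ hT' hcard
  rw [filter_insert, if_neg hcw, filter_erase, card_erase_of_mem hu'] at hdrop
  have := card_pos.2 ⟨u, hu'⟩
  omega

end

theorem stmt_3_general {V : Type*} [Fintype V] [DecidableEq V] (G : SimpleGraph V)
    (h : maxDeg G ≤ 2) :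
    vsChi G = ivsChi G := by
  obtain ⟨S, hS, hmin⟩ := exists_reducesChi_minimal G
  obtain ⟨T, hT, hTcard, hTindep⟩ := hS.exists_indep_of_minimal h hmin
  have hvs : vsChi G = S.card :=
    IsLeast.csInf_eq ⟨⟨S, rfl, hS⟩, by rintro _ ⟨T', rfl, hT'⟩; exact hmin T' hT'⟩
  have hivs : ivsChi G = S.card :=
    IsLeast.csInf_eq ⟨⟨T, hTcard, hTindep, hT⟩, by rintro _ ⟨T', rfl, -, hT'⟩; exact hmin T' hT'⟩
  rw [hvs, hivs]

/-- If `G` is a nonempty finite simple graph with `Δ(G) ≤ 2`, then `vs_χ(G) = ivs_χ(G)`. -/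
theorem stmt_3 {V : Type*} [Fintype V] [DecidableEq V] [Nonempty V] (G : SimpleGraph V)
    (h : maxDeg G ≤ 2) :
    vsChi G = ivsChi G :=
  stmt_3_general G h
end

section
/- For every natural number n ≥ 9, there exists a finite simple graph G on n vertices with Δ(G) = 4, χ(G) = 3, ivs_χ(G) = 3 and vs_χ(G) = 2. In particular, for every such n there exists a graph G with 2·χ(G) ≥ Δ(G) + 2 and ivs_χ(G) > vs_χ(G). -/
open SimpleGraph Finset

namespace ChromaticStability

variable {V W : Type*}

theorem chromaticNumber_eq_chi [Fintype V] (G : SimpleGraph V) : G.chromaticNumber = chi G :=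
  (ENat.natCast_toNat (chromaticNumber_ne_top_iff_exists.mpr ⟨_, G.colorable_of_fintype⟩)).symm

theorem chi_eq_three_iff [Fintype V] {G : SimpleGraph V} :
    chi G = 3 ↔ G.Colorable 3 ∧ ¬G.Colorable 2 := by
  rw [← Nat.cast_inj (R := ℕ∞), ← chromaticNumber_eq_chi]
  exact chromaticNumber_eq_iff_colorable_not_colorable (n := 2)

theorem chi_eq_two_iff [Fintype V] {G : SimpleGraph V} : chi G = 2 ↔ G.Colorable 2 ∧ G ≠ ⊥ := by
  rw [← Nat.cast_inj (R := ℕ∞), ← chromaticNumber_eq_chi]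
  exact chromaticNumber_eq_two_iff

theorem not_colorable_two_of_closed_walk_five {G : SimpleGraph V} (c : Fin 5 → V)
    (hc : ∀ i, G.Adj (c i) (c (i + 1))) : ¬G.Colorable 2 := by
  rintro ⟨C⟩
  have alternation_fails : ∀ g : Fin 5 → Fin 2, ∃ i, g i = g (i + 1) := by decide
  obtain ⟨i, hi⟩ := alternation_fails (C ∘ c)
  exact C.valid (hc i) hi

theorem maxDegree_map [Fintype V] [Fintype W] (H : SimpleGraph V) [DecidableRel H.Adj]
    (f : V ↪ W) [DecidableRel (H.map f).Adj] : (H.map f).maxDegree = H.maxDegree := by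
  refine le_antisymm (maxDegree_le_of_forall_degree_le _ _ fun w ↦ ?_)
    (Embedding.map f H).toCopy.maxDegree_mono
  by_cases hw : w ∈ Set.range f
  · obtain ⟨v, rfl⟩ := hw
    rw [← card_neighborSet_eq_degree, ← Nat.card_eq_fintype_card, neighborSet_map,
      Nat.card_image_of_injective f.injective, Nat.card_eq_fintype_card, card_neighborSet_eq_degree]
    exact degree_le_maxDegree H v
  · have hw' : w ∉ (H.map f).support := by
      rw [support_map]
      exact fun ⟨v, _, hv⟩ ↦ hw ⟨v, hv⟩
    rw [((H.map f).degree_eq_zero_iff_notMem_support w).mpr hw']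
    exact Nat.zero_le _

theorem colorable_induce_map {H : SimpleGraph V} {f : V ↪ W} {s : Set V} {t : Set W}
    (hts : f ⁻¹' t ⊆ s) {n : ℕ} [NeZero n] (hc : (H.induce s).Colorable n) :
    ((H.map f).induce t).Colorable n := by
  classical
  obtain ⟨C⟩ := hc
  let c : V → Fin n := fun v ↦ if hv : v ∈ s then C ⟨v, hv⟩ else 0
  refine ⟨Coloring.mk (fun w ↦ Function.extend f c 0 w) ?_⟩
  rintro ⟨_, hu⟩ ⟨_, hv⟩ ⟨-, a, b, hab, rfl, rfl⟩
  have ha : a ∈ s := hts hu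
  have hb : b ∈ s := hts hv
  simpa [f.injective.extend_apply, c, ha, hb] using C.valid (v := ⟨a, ha⟩) (w := ⟨b, hb⟩) hab

theorem exists_not_adj_of_card_le_two [Nonempty V] [DecidableEq V] {G : SimpleGraph V}
    {T : Finset V} (hT : #T ≤ 2) (hind : ∀ x ∈ T, ∀ y ∈ T, ¬G.Adj x y) :
    ∃ a b, ¬G.Adj a b ∧ T ⊆ {a, b} := by
  interval_cases h : #T
  · obtain rfl := card_eq_zero.mp h
    exact ⟨Classical.arbitrary V, _, G.loopless.irrefl _, empty_subset _⟩
  · obtain ⟨a, rfl⟩ := card_eq_one.mp h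
    exact ⟨a, a, G.loopless.irrefl a, by simp⟩
  · obtain ⟨a, b, -, rfl⟩ := card_eq_two.mp h
    exact ⟨a, b, hind a (by simp) b (by simp), subset_refl _⟩

/-- Each edge is listed once, at its smaller endpoint. -/
def H₉ : SimpleGraph (Fin 9) :=
  fromRel fun a b ↦ b ∈ ![[4, 5, 6, 7], [2, 3, 5], [4], [4, 6, 8], [7], [7, 8], [7], [], []] a

instance : DecidableRel H₉.Adj :=
  inferInstanceAs (DecidableRel (fromRel _).Adj)

namespace H₉

/-- The triangles `047`, `057`, `067` appear as the closed walks `a b a b c`. -/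
def oddWalks : Fin 7 → Fin 5 → Fin 9 :=
  ![![0, 4, 0, 4, 7], ![0, 5, 0, 5, 7], ![0, 6, 0, 6, 7], ![1, 2, 4, 7, 5], ![0, 4, 3, 8, 5],
    ![0, 4, 2, 1, 5], ![3, 4, 7, 5, 8]]

theorem oddWalks_adj : ∀ k i, H₉.Adj (oddWalks k i) (oddWalks k (i + 1)) := by decide

theorem exists_oddWalk_avoiding :
    ∀ a b, ¬H₉.Adj a b → ∃ k, ∀ i, oddWalks k i ≠ a ∧ oddWalks k i ≠ b := by
  decide

theorem maxDegree_eq : H₉.maxDegree = 4 := by decide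

theorem colorable_three : H₉.Colorable 3 :=
  ⟨Coloring.mk ![0, 0, 1, 1, 2, 2, 2, 1, 0] (by decide)⟩

theorem colorable_two_induce_compl_pair :
    (H₉.induce ↑({0, 5}ᶜ : Finset (Fin 9))).Colorable 2 :=
  ⟨Coloring.mk (fun v ↦ ![0, 0, 1, 1, 0, 0, 0, 1, 0] v) (by decide)⟩

theorem colorable_two_induce_compl_triple :
    (H₉.induce ↑({0, 1, 8}ᶜ : Finset (Fin 9))).Colorable 2 :=
  ⟨Coloring.mk (fun v ↦ ![0, 0, 0, 0, 1, 1, 1, 0, 0] v) (by decide)⟩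

variable {W : Type*} [Fintype W] (f : Fin 9 ↪ W)

theorem maxDeg_map : maxDeg (H₉.map f) = 4 := by
  classical
  rw [← maxDegree_eq, ← maxDegree_map H₉ f]
  unfold maxDeg
  congr

theorem chi_map : chi (H₉.map f) = 3 :=
  chi_eq_three_iff.mpr ⟨colorable_three.map f,
    not_colorable_two_of_closed_walk_five (f ∘ oddWalks 0) fun i ↦ by simpa using oddWalks_adj 0 i⟩

theorem not_colorable_two_induce_compl_map [DecidableEq W] {S : Finset W} (hS : #S ≤ 2)
    (hind : ∀ x ∈ S, ∀ y ∈ S, ¬(H₉.map f).Adj x y) :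
    ¬((H₉.map f).induce ↑Sᶜ).Colorable 2 := by
  set T := S.preimage f f.injective.injOn
  have hTS : #T ≤ #S := card_le_card_of_injOn f (fun _ ↦ mem_preimage.mp) f.injective.injOn
  obtain ⟨a, b, hab, hT⟩ := exists_not_adj_of_card_le_two (hTS.trans hS) fun x hx y hy ↦ by
    simpa using hind _ (mem_preimage.mp hx) _ (mem_preimage.mp hy)
  obtain ⟨k, hk⟩ := exists_oddWalk_avoiding a b hab
  have avoids (i : Fin 5) : f (oddWalks k i) ∉ S := fun hi ↦ by
    simpa [hk i] using hT (mem_preimage.mpr hi)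
  exact not_colorable_two_of_closed_walk_five
    (fun i ↦ ⟨f (oddWalks k i), by simpa using avoids i⟩) fun i ↦ by simpa using oddWalks_adj k i

theorem chi_induce_compl_map_eq_two [DecidableEq W] {T : Finset (Fin 9)}
    (hcol : (H₉.induce ↑Tᶜ).Colorable 2) {a b : Fin 9} (ha : a ∉ T) (hb : b ∉ T)
    (hab : H₉.Adj a b) : chi ((H₉.map f).induce ↑(T.map f)ᶜ) = 2 := by
  refine chi_eq_two_iff.mpr ⟨colorable_induce_map (fun v hv ↦ by simpa using hv) hcol, ?_⟩
  rw [← SimpleGraph.edgeSet_nonempty]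
  exact ⟨s(⟨f a, by simpa using ha⟩, ⟨f b, by simpa using hb⟩), by simpa using hab⟩

theorem vsChi_map [DecidableEq W] : vsChi (H₉.map f) = 2 := by
  refine IsLeast.csInf_eq ⟨⟨({0, 5} : Finset (Fin 9)).map f, by simp, ?_⟩, ?_⟩
  · rw [chi_map, chi_induce_compl_map_eq_two f colorable_two_induce_compl_pair
      (a := 1) (b := 2) (by decide) (by decide) (by decide)]
  · rintro m ⟨S, rfl, hS⟩
    by_contra! hlt
    refine (not_colorable_two_induce_compl_map f (S := S) (by omega) fun x hx y hy ↦ ?_)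
      (chi_eq_two_iff.mp (by rw [hS, chi_map])).1
    rw [card_le_one.mp (by omega) x hx y hy]
    exact (H₉.map f).loopless.irrefl y

theorem ivsChi_map [DecidableEq W] : ivsChi (H₉.map f) = 3 := by
  refine IsLeast.csInf_eq ⟨⟨({0, 1, 8} : Finset (Fin 9)).map f, by simp, ?_, ?_⟩, ?_⟩
  · simp only [mem_map]
    rintro _ ⟨a, ha, rfl⟩ _ ⟨b, hb, rfl⟩
    rw [map_adj_apply]
    revert a b
    decide
  · rw [chi_map, chi_induce_compl_map_eq_two f colorable_two_induce_compl_triple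
      (a := 2) (b := 4) (by decide) (by decide) (by decide)]
  · rintro m ⟨S, rfl, hind, hS⟩
    by_contra! hlt
    exact not_colorable_two_induce_compl_map f (by omega) hind
      (chi_eq_two_iff.mp (by rw [hS, chi_map])).1

end H₉

end ChromaticStability

open ChromaticStability

/-- For every `n ≥ 9` there is a graph on `n` vertices with `Δ(G) = 4`, `χ(G) = 3`,
`ivs_χ(G) = 3` and `vs_χ(G) = 2`; in particular one with `2χ(G) ≥ Δ(G) + 2` and
`ivs_χ(G) > vs_χ(G)`. -/
theorem stmt_7 (n : ℕ) (hn : 9 ≤ n) :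
    ∃ G : SimpleGraph (Fin n),
      (maxDeg G = 4 ∧ chi G = 3 ∧ ivsChi G = 3 ∧ vsChi G = 2) ∧
      (2 * chi G ≥ maxDeg G + 2 ∧ ivsChi G > vsChi G) := by
  refine ⟨H₉.map (Fin.castLEEmb hn), ?_⟩
  rw [H₉.maxDeg_map, H₉.chi_map, H₉.ivsChi_map, H₉.vsChi_map]
  decide
end

section
/- Let H be a finite bipartite simple graph of order m with Δ(H) ≤ 4 that contains a cycle C of even length 2k with k ≥ 3, and let a, b be two vertices of C that are non-adjacent in H, are at odd distance in H, and satisfy deg_H(a) = deg_H(b) = 2. Let G be the graph with vertex set V(H) together with three new vertices u, v, w, whose edges are: all edges of H, the triangle edges uv, uw, vw, and the edges av, bv, aw, bw. Then G has m + 3 vertices, Δ(G) = 4, χ(G) = 3, ivs_χ(G) = 3 and vs_χ(G) = 2. -/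
/-- The graph obtained from `H` by adding three new vertices `u = inr 0`, `v = inr 1`,
`w = inr 2` forming a triangle, together with the edges `av`, `bv`, `aw`, `bw`. -/
def addTriangleGadget {V : Type*} (H : SimpleGraph V) (a b : V) :
    SimpleGraph (V ⊕ Fin 3) :=
  SimpleGraph.fromRel (fun p q =>
    match p, q with
    | Sum.inl s, Sum.inl t => H.Adj s t
    | Sum.inl s, Sum.inr i => (s = a ∨ s = b) ∧ ((i : ℕ) = 1 ∨ (i : ℕ) = 2)
    | Sum.inr _, Sum.inl _ => False
    | Sum.inr i, Sum.inr j => i ≠ j)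

/-!
The triangle `uvw` gives `χ(G) ≥ 3`, and `G` is `3`-colourable because `{u, a, b}` is independent
and `G - {u, a, b}` is bipartite (a `2`-colouring of `H`, with `v` and `w` coloured differently).
As `H` is bipartite and `a`, `b` are at odd distance, every `a`–`b` walk in `H` is odd, so closing
it through `v` or `w` gives an odd closed walk. Deleting an independent set of at most two vertices
therefore always leaves an odd closed walk: the triangle `uvw`; or, if `u` is deleted, a triangle
`xvw` with `x ∈ {a, b}`; or, if `v` (say) is deleted, then `w`, `a`, `b` survive by independence,
and since at most one further vertex is gone, one of the two `a`–`b` arcs of the cycle `C`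
survives.
On the other hand `G - {v, w}` is `H` plus an isolated vertex, which is bipartite.
-/

namespace SimpleGraph

variable {W : Type*} {G : SimpleGraph W}

theorem natCast_chi [Fintype W] : (chi G : ℕ∞) = G.chromaticNumber :=
  ENat.natCast_toNat (chromaticNumber_ne_top_iff_exists.2 ⟨_, G.colorable_of_fintype⟩)

theorem chi_le_iff_colorable [Fintype W] {n : ℕ} : chi G ≤ n ↔ G.Colorable n := by
  rw [← chromaticNumber_le_iff_colorable, ← natCast_chi, Nat.cast_le]

theorem chi_eq_succ_iff [Fintype W] {n : ℕ} :
    chi G = n + 1 ↔ G.Colorable (n + 1) ∧ ¬ G.Colorable n := by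
  rw [← chromaticNumber_eq_iff_colorable_not_colorable, ← natCast_chi]
  norm_cast

theorem ne_of_odd_dist {u v : W} (h : Odd (G.dist u v)) : u ≠ v := by
  rintro rfl
  simp at h

theorem not_colorable_one_of_adj {x y : W} (h : G.Adj x y) : ¬ G.Colorable 1 :=
  fun ⟨c⟩ => c.valid h (Subsingleton.elim _ _)

theorem Colorable.odd_length_of_odd_dist (hG : G.Colorable 2) {u v : W}
    (hd : Odd (G.dist u v)) (p : G.Walk u v) : Odd p.length := by
  obtain ⟨q, hq⟩ := p.reachable.exists_walk_length_eq_dist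
  have := two_colorable_iff_forall_loop_even.1 hG _ (p.append q.reverse)
  rw [Walk.length_append, Walk.length_reverse, hq, Nat.even_add] at this
  exact Nat.not_even_iff_odd.1 fun h => Nat.not_even_iff_odd.2 hd (this.1 h)

theorem Walk.not_colorable_two_of_odd_length {u : W} (p : G.Walk u u) (hp : Odd p.length) :
    ¬ G.Colorable 2 := fun hG =>
  Nat.not_even_iff_odd.2 hp (two_colorable_iff_forall_loop_even.1 hG u p)

theorem Walk.not_colorable_two_induce {T : Set W} {u : W} (p : G.Walk u u)
    (hT : ∀ x ∈ p.support, x ∈ T) (hp : Odd p.length) : ¬ (G.induce T).Colorable 2 := by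
  refine (p.induce T hT).not_colorable_two_of_odd_length ?_
  rwa [← Walk.length_map (Embedding.induce T).toHom, p.map_induce]

theorem not_colorable_two_induce_of_triangle {T : Set W} {x y z : W} (hxy : G.Adj x y)
    (hyz : G.Adj y z) (hzx : G.Adj z x) (hx : x ∈ T) (hy : y ∈ T) (hz : z ∈ T) :
    ¬ (G.induce T).Colorable 2 :=
  (Walk.cons hxy (.cons hyz (.cons hzx .nil))).not_colorable_two_induce
    (by simp [hx, hy, hz]) (by simp [Nat.odd_iff])

theorem colorable_induce_of_forall_ne {T : Set W} {n : ℕ} (f : W → Fin n)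
    (hf : ∀ x ∈ T, ∀ y ∈ T, G.Adj x y → f x ≠ f y) : (G.induce T).Colorable n :=
  ⟨Coloring.mk (fun z => f z) fun {z z'} h => hf z z.2 z' z'.2 h⟩

theorem colorable_succ_of_colorable_induce_compl {S : Set W} {n : ℕ}
    (hS : ∀ x ∈ S, ∀ y ∈ S, ¬ G.Adj x y) (h : (G.induce Sᶜ).Colorable n) :
    G.Colorable (n + 1) := by
  classical
  obtain ⟨c⟩ := h
  refine ⟨Coloring.mk
    (fun x => if hx : x ∈ S then Fin.last n else (c ⟨x, hx⟩).castSucc) ?_⟩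
  intro x y hxy
  by_cases hx : x ∈ S <;> by_cases hy : y ∈ S <;> simp only [hx, hy, dite_true, dite_false]
  · exact absurd hxy (hS x hx y hy)
  · exact (Fin.castSucc_ne_last _).symm
  · exact Fin.castSucc_ne_last _
  · exact fun he =>
      c.valid (show (G.induce Sᶜ).Adj ⟨x, hx⟩ ⟨y, hy⟩ from hxy) (Fin.castSucc_inj.1 he)

theorem Walk.IsCycle.exists_walk_not_mem_support {c : W} {p : G.Walk c c}
    (hp : p.IsCycle) {a b x : W} (ha : a ∈ p.support) (hb : b ∈ p.support) (hxa : x ≠ a)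
    (hxb : x ≠ b) : ∃ q : G.Walk a b, x ∉ q.support := by
  classical
  have hb' : b ∈ (p.rotate a ha).support := (Walk.mem_support_rotate_iff ..).2 hb
  by_contra! h
  have h₁ : x ∈ ((p.rotate a ha).takeUntil b hb').support.tail :=
    ((Walk.mem_support_iff _).1 (h _)).resolve_left hxa
  have h₂ : x ∈ ((p.rotate a ha).dropUntil b hb').support.tail := by
    have := h ((p.rotate a ha).dropUntil b hb').reverse
    rw [Walk.support_reverse, List.mem_reverse] at this
    exact ((Walk.mem_support_iff _).1 this).resolve_left hxb
  have hnodup := (hp.rotate ha).support_nodup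
  rw [← (p.rotate a ha).take_spec hb', Walk.tail_support_append] at hnodup
  exact List.disjoint_of_nodup_append hnodup h₁ h₂

end SimpleGraph

namespace addTriangleGadget

open SimpleGraph

variable {V : Type*} {H : SimpleGraph V} {a b : V}

@[simp]
theorem adj_inl_inl {s t : V} :
    (addTriangleGadget H a b).Adj (.inl s) (.inl t) ↔ H.Adj s t := by
  simp only [addTriangleGadget, fromRel_adj, ne_eq, Sum.inl.injEq]
  exact ⟨fun h => h.2.elim id H.adj_symm, fun h => ⟨h.ne, .inl h⟩⟩

@[simp]
theorem adj_inl_inr {s : V} {i : Fin 3} :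
    (addTriangleGadget H a b).Adj (.inl s) (.inr i) ↔ (s = a ∨ s = b) ∧ i ≠ 0 := by
  simp only [addTriangleGadget, fromRel_adj]
  fin_cases i <;> simp

@[simp]
theorem adj_inr_inl {s : V} {i : Fin 3} :
    (addTriangleGadget H a b).Adj (.inr i) (.inl s) ↔ (s = a ∨ s = b) ∧ i ≠ 0 := by
  rw [adj_comm, adj_inl_inr]

@[simp]
theorem adj_inr_inr {i j : Fin 3} :
    (addTriangleGadget H a b).Adj (.inr i) (.inr j) ↔ i ≠ j := by
  simp [addTriangleGadget, eq_comm]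

def inlHom (H : SimpleGraph V) (a b : V) : H →g addTriangleGadget H a b :=
  ⟨Sum.inl, adj_inl_inl.2⟩

section Degree

variable [Fintype V] [DecidableRel (addTriangleGadget H a b).Adj]

theorem degree_inl_of_ne [DecidableRel H.Adj] {x : V} (hxa : x ≠ a) (hxb : x ≠ b) :
    (addTriangleGadget H a b).degree (.inl x) = H.degree x := by
  classical
  have : (addTriangleGadget H a b).neighborFinset (.inl x) = (H.neighborFinset x).map .inl := by
    ext (y | j) <;> simp [hxa, hxb]
  rw [← card_neighborFinset_eq_degree, this, Finset.card_map, card_neighborFinset_eq_degree]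

theorem degree_inl_le [DecidableRel H.Adj] (x : V) :
    (addTriangleGadget H a b).degree (.inl x) ≤ H.degree x + 2 := by
  classical
  rw [← card_neighborFinset_eq_degree]
  refine (Finset.card_le_card (t := (H.neighborFinset x).map .inl ∪ {.inr 1, .inr 2}) ?_).trans
    ((Finset.card_union_le _ _).trans (by simp))
  rintro (y | j) h
  · simp_all
  · fin_cases j <;> simp_all

theorem degree_inr_le (i : Fin 3) : (addTriangleGadget H a b).degree (.inr i) ≤ 4 := by
  classical
  rw [← card_neighborFinset_eq_degree]
  refine (Finset.card_le_card (t := {.inl a, .inl b} ∪ (Finset.univ.erase i).map .inr) ?_).trans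
    ((Finset.card_union_le _ _).trans (by simp [Finset.card_le_two]))
  rintro (y | j) h
  · simp_all
  · simp_all [eq_comm]

theorem degree_inr_one (hab : a ≠ b) : (addTriangleGadget H a b).degree (.inr 1) = 4 := by
  classical
  have : (addTriangleGadget H a b).neighborFinset (.inr 1) = {.inl a, .inl b, .inr 0, .inr 2} := by
    ext (y | j)
    · simp [or_comm, eq_comm]
    · fin_cases j <;> simp
  rw [← card_neighborFinset_eq_degree, this]
  simp [hab]

end Degree

theorem maxDeg_eq_four [Fintype V] (hab : a ≠ b) (hΔ : maxDeg H ≤ 4) (ha : deg H a ≤ 2)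
    (hb : deg H b ≤ 2) : maxDeg (addTriangleGadget H a b) = 4 := by
  classical
  unfold maxDeg at *
  unfold deg at ha hb
  refine le_antisymm (maxDegree_le_of_forall_degree_le _ _ ?_)
    ((degree_inr_one hab).symm.le.trans (degree_le_maxDegree _ _))
  rintro (x | i)
  · by_cases hx : x = a ∨ x = b
    · rcases hx with rfl | rfl <;> exact (degree_inl_le _).trans (by omega)
    · push Not at hx
      exact (degree_inl_of_ne hx.1 hx.2).le.trans ((H.degree_le_maxDegree x).trans hΔ)
  · exact degree_inr_le i

theorem not_colorable_two : ¬ (addTriangleGadget H a b).Colorable 2 :=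
  Walk.not_colorable_two_of_odd_length
    (.cons (adj_inr_inr (i := 0) (j := 1) |>.2 (by decide))
      (.cons (adj_inr_inr (i := 1) (j := 2) |>.2 (by decide))
        (.cons (adj_inr_inr (i := 2) (j := 0) |>.2 (by decide)) .nil)))
    (by simp [Nat.odd_iff])

theorem not_colorable_two_induce_of_walk {T : Set (V ⊕ Fin 3)} (q : H.Walk a b)
    (hq : Odd q.length) (hqT : ∀ y ∈ q.support, .inl y ∈ T) {j : Fin 3} (hj : j ≠ 0)
    (hjT : .inr j ∈ T) : ¬ ((addTriangleGadget H a b).induce T).Colorable 2 := by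
  -- stated with `inlHom` so that the endpoints agree syntactically with those of `q.map inlHom`
  have hja : (addTriangleGadget H a b).Adj (.inr j) (inlHom H a b a) :=
    adj_inr_inl.2 ⟨.inl rfl, hj⟩
  have hbj : (addTriangleGadget H a b).Adj (inlHom H a b b) (.inr j) :=
    adj_inl_inr.2 ⟨.inr rfl, hj⟩
  refine (Walk.cons hja ((q.map (inlHom H a b)).concat hbj)).not_colorable_two_induce ?_ ?_
  · intro x hx
    simp only [Walk.support_cons, Walk.support_concat, Walk.support_map, List.mem_cons,
      List.mem_append, List.mem_map, List.not_mem_nil, or_false] at hx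
    rcases hx with rfl | ⟨y, hy, rfl⟩ | rfl
    exacts [hjT, hqT y hy, hjT]
  · simpa [Nat.odd_add_one] using hq

theorem exists_walk_avoiding_of_inr_mem (hreach : H.Reachable a b)
    (havoid : ∀ x, x ≠ a → x ≠ b → ∃ q : H.Walk a b, x ∉ q.support)
    {S : Finset (V ⊕ Fin 3)} (hS : S.card ≤ 2)
    (hind : ∀ x ∈ S, ∀ y ∈ S, ¬ (addTriangleGadget H a b).Adj x y)
    {j : Fin 3} (hj : j ≠ 0) (hjS : .inr j ∈ S) :
    ∃ q : H.Walk a b, ∀ y ∈ q.support, .inl y ∉ S := by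
  by_cases hx : ∃ x, .inl x ∈ S
  · obtain ⟨x, hxS⟩ := hx
    have hxab : ¬ (x = a ∨ x = b) := fun h => hind _ hxS _ hjS (adj_inl_inr.2 ⟨h, hj⟩)
    push Not at hxab
    obtain ⟨q, hq⟩ := havoid x hxab.1 hxab.2
    refine ⟨q, fun y hy hyS => (Finset.two_lt_card_iff.2 ⟨_, _, _, hjS, hxS, hyS, by simp,
      by simp, ?_⟩).not_ge hS⟩
    rintro ⟨⟩
    exact hq hy
  · push Not at hx
    exact ⟨hreach.some, fun y _ => hx y⟩

theorem not_colorable_two_induce_compl [Fintype V] [DecidableEq V] (hH : H.Colorable 2)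
    (hd : Odd (H.dist a b))
    (havoid : ∀ x, x ≠ a → x ≠ b → ∃ q : H.Walk a b, x ∉ q.support)
    {S : Finset (V ⊕ Fin 3)} (hS : S.card ≤ 2)
    (hind : ∀ x ∈ S, ∀ y ∈ S, ¬ (addTriangleGadget H a b).Adj x y) :
    ¬ ((addTriangleGadget H a b).induce ↑Sᶜ).Colorable 2 := by
  by_cases hj : ∃ j ≠ 0, .inr j ∈ S
  · obtain ⟨j, hj0, hjS⟩ := hj
    obtain ⟨j', hj'0, hj'j⟩ : ∃ j', j' ≠ 0 ∧ j' ≠ j :=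
      (by decide : ∀ j : Fin 3, j ≠ 0 → ∃ j', j' ≠ 0 ∧ j' ≠ j) j hj0
    obtain ⟨q, hq⟩ := exists_walk_avoiding_of_inr_mem
      (Reachable.of_dist_ne_zero hd.pos.ne') havoid hS hind hj0 hjS
    refine not_colorable_two_induce_of_walk q (hH.odd_length_of_odd_dist hd q) (by simpa using hq)
      hj'0 ?_
    simpa using fun h => hind _ hjS _ h (adj_inr_inr.2 hj'j.symm)
  · push Not at hj
    have h1 : (.inr 1 : V ⊕ Fin 3) ∈ (↑Sᶜ : Set _) := by simpa using hj 1 (by decide)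
    have h2 : (.inr 2 : V ⊕ Fin 3) ∈ (↑Sᶜ : Set _) := by simpa using hj 2 (by decide)
    have h12 : (addTriangleGadget H a b).Adj (.inr 1) (.inr 2) := adj_inr_inr.2 (by decide)
    by_cases h0 : .inr 0 ∈ S
    · obtain ⟨x, hx, hxS⟩ : ∃ x, (x = a ∨ x = b) ∧ .inl x ∉ S := by
        by_contra! h
        exact (Finset.two_lt_card_iff.2 ⟨_, _, _, h0, h a (.inl rfl), h b (.inr rfl), by simp,
          by simp, by simpa using ne_of_odd_dist hd⟩).not_ge hS
      exact not_colorable_two_induce_of_triangle ((adj_inl_inr (i := 1)).2 ⟨hx, by decide⟩) h12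
        ((adj_inr_inl (i := 2)).2 ⟨hx, by decide⟩) (by simpa using hxS) h1 h2
    · exact not_colorable_two_induce_of_triangle (adj_inr_inr (i := 0).2 (by decide)) h12
        (adj_inr_inr (j := 0).2 (by decide)) (by simpa using h0) h1 h2

theorem forall_not_adj_uab [DecidableEq V] (hnadj : ¬ H.Adj a b) :
    ∀ x ∈ ({.inr 0, .inl a, .inl b} : Finset (V ⊕ Fin 3)),
      ∀ y ∈ ({.inr 0, .inl a, .inl b} : Finset (V ⊕ Fin 3)),
        ¬ (addTriangleGadget H a b).Adj x y := by
  simp only [Finset.mem_insert, Finset.mem_singleton]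
  rintro x (rfl | rfl | rfl) y (rfl | rfl | rfl) <;> simp [hnadj, H.adj_comm b a]

theorem colorable_two_induce_compl_uab [Fintype V] [DecidableEq V] (hH : H.Colorable 2) :
    ((addTriangleGadget H a b).induce
      ↑(({.inr 0, .inl a, .inl b} : Finset (V ⊕ Fin 3))ᶜ)).Colorable 2 := by
  obtain ⟨c⟩ := hH
  refine colorable_induce_of_forall_ne (Sum.elim c ![0, 0, 1]) ?_
  rintro (x | i) hx (y | j) hy h
  · exact c.valid (adj_inl_inl.1 h)
  · simp_all
  · simp_all
  · fin_cases i <;> fin_cases j <;> simp_all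

theorem colorable_two_induce_compl_vw [Fintype V] [DecidableEq V] (hH : H.Colorable 2) :
    ((addTriangleGadget H a b).induce
      ↑(({.inr 1, .inr 2} : Finset (V ⊕ Fin 3))ᶜ)).Colorable 2 := by
  obtain ⟨c⟩ := hH
  refine colorable_induce_of_forall_ne (Sum.elim c 0) ?_
  rintro (x | i) hx (y | j) hy h
  · exact c.valid (adj_inl_inl.1 h)
  · fin_cases j <;> simp_all
  · fin_cases i <;> simp_all
  · fin_cases i <;> fin_cases j <;> simp_all

theorem chi_eq_three [Fintype V] (hH : H.Colorable 2) (hnadj : ¬ H.Adj a b) :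
    chi (addTriangleGadget H a b) = 3 := by
  classical
  refine chi_eq_succ_iff.2
    ⟨colorable_succ_of_colorable_induce_compl (forall_not_adj_uab hnadj) ?_, not_colorable_two⟩
  rw [← Finset.coe_compl]
  exact colorable_two_induce_compl_uab hH

theorem ivsChi_eq_three [Fintype V] [DecidableEq V] (hH : H.Colorable 2)
    (hd : Odd (H.dist a b)) (hnadj : ¬ H.Adj a b)
    (havoid : ∀ x, x ≠ a → x ≠ b → ∃ q : H.Walk a b, x ∉ q.support) :
    ivsChi (addTriangleGadget H a b) = 3 := by
  have hvw : ((addTriangleGadget H a b).induce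
      ↑(({.inr 0, .inl a, .inl b} : Finset (V ⊕ Fin 3))ᶜ)).Adj
        ⟨(.inr 1 : V ⊕ Fin 3), by simp⟩ ⟨(.inr 2 : V ⊕ Fin 3), by simp⟩ := by simp
  rw [ivsChi, chi_eq_three hH hnadj]
  refine IsLeast.csInf_eq ⟨⟨_, ?_, forall_not_adj_uab hnadj, chi_eq_succ_iff.2
    ⟨colorable_two_induce_compl_uab hH, not_colorable_one_of_adj hvw⟩⟩, ?_⟩
  · simp [ne_of_odd_dist hd]
  · rintro n ⟨S, rfl, hind, hS⟩
    by_contra! hlt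
    exact not_colorable_two_induce_compl hH hd havoid (by omega) hind (chi_eq_succ_iff.1 hS).1

theorem vsChi_eq_two [Fintype V] [DecidableEq V] (hH : H.Colorable 2)
    (hd : Odd (H.dist a b)) (hnadj : ¬ H.Adj a b)
    (havoid : ∀ x, x ≠ a → x ≠ b → ∃ q : H.Walk a b, x ∉ q.support) :
    vsChi (addTriangleGadget H a b) = 2 := by
  obtain ⟨p⟩ := Reachable.of_dist_ne_zero hd.pos.ne'
  have hp := p.adj_snd (Walk.not_nil_of_ne (ne_of_odd_dist hd))
  have hap : ((addTriangleGadget H a b).induce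
      ↑(({.inr 1, .inr 2} : Finset (V ⊕ Fin 3))ᶜ)).Adj
        ⟨(.inl a : V ⊕ Fin 3), by simp⟩ ⟨(.inl p.snd : V ⊕ Fin 3), by simp⟩ := by
    simpa using hp
  rw [vsChi, chi_eq_three hH hnadj]
  refine IsLeast.csInf_eq ⟨⟨_, by simp,
    chi_eq_succ_iff.2 ⟨colorable_two_induce_compl_vw hH, not_colorable_one_of_adj hap⟩⟩, ?_⟩
  rintro n ⟨S, rfl, hS⟩
  by_contra! hlt
  refine not_colorable_two_induce_compl hH hd havoid (by omega) ?_ (chi_eq_succ_iff.1 hS).1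
  intro x hx y hy
  rw [Finset.card_le_one.1 (by omega) x hx y hy]
  exact (addTriangleGadget H a b).irrefl

end addTriangleGadget

theorem stmt_10_general {V : Type*} [Fintype V] [DecidableEq V] (H : SimpleGraph V)
    (m k : ℕ) (hm : Fintype.card V = m)
    (hbip : chi H ≤ 2) (hΔ : maxDeg H ≤ 4) (a b : V)
    (hcyc : ∃ (c : V) (p : H.Walk c c),
      p.IsCycle ∧ p.length = 2 * k ∧ a ∈ p.support ∧ b ∈ p.support)
    (hnadj : ¬ H.Adj a b) (hodd : Odd (H.dist a b))
    (hda : deg H a = 2) (hdb : deg H b = 2) :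
    Fintype.card (V ⊕ Fin 3) = m + 3 ∧
      maxDeg (addTriangleGadget H a b) = 4 ∧
      chi (addTriangleGadget H a b) = 3 ∧
      ivsChi (addTriangleGadget H a b) = 3 ∧
      vsChi (addTriangleGadget H a b) = 2 := by
  obtain ⟨c, p, hp, -, ha, hb⟩ := hcyc
  have hH : H.Colorable 2 := SimpleGraph.chi_le_iff_colorable.1 hbip
  have havoid (x : V) (hxa : x ≠ a) (hxb : x ≠ b) : ∃ q : H.Walk a b, x ∉ q.support :=
    hp.exists_walk_not_mem_support ha hb hxa hxb
  exact ⟨by simp [hm],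
    addTriangleGadget.maxDeg_eq_four (SimpleGraph.ne_of_odd_dist hodd) hΔ hda.le hdb.le,
    addTriangleGadget.chi_eq_three hH hnadj,
    addTriangleGadget.ivsChi_eq_three hH hodd hnadj havoid,
    addTriangleGadget.vsChi_eq_two hH hodd hnadj havoid⟩

/-- If `H` is a bipartite graph of order `m` with `Δ(H) ≤ 4` containing a cycle of even
length `2k`, `k ≥ 3`, and `a, b` are vertices of that cycle which are non-adjacent in `H`,
at odd distance in `H`, and of degree `2`, then the graph `G` obtained by adding a triangle
`uvw` and the edges `av, bv, aw, bw` has `m + 3` vertices, `Δ(G) = 4`, `χ(G) = 3`,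
`ivs_χ(G) = 3` and `vs_χ(G) = 2`. -/
theorem stmt_10 {V : Type*} [Fintype V] [DecidableEq V] (H : SimpleGraph V)
    (m k : ℕ) (hm : Fintype.card V = m) (hk : 3 ≤ k)
    (hbip : chi H ≤ 2) (hΔ : maxDeg H ≤ 4) (a b : V)
    (hcyc : ∃ (c : V) (p : H.Walk c c),
      p.IsCycle ∧ p.length = 2 * k ∧ a ∈ p.support ∧ b ∈ p.support)
    (hnadj : ¬ H.Adj a b) (hodd : Odd (H.dist a b))
    (hda : deg H a = 2) (hdb : deg H b = 2) :
    Fintype.card (V ⊕ Fin 3) = m + 3 ∧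
      maxDeg (addTriangleGadget H a b) = 4 ∧
      chi (addTriangleGadget H a b) = 3 ∧
      ivsChi (addTriangleGadget H a b) = 3 ∧
      vsChi (addTriangleGadget H a b) = 2 :=
  stmt_10_general H m k hm hbip hΔ a b hcyc hnadj hodd hda hdb
end
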